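/- arXiv:1507.05486 — 3 statements merged into one kernel-verified Lean document; each statement's English description precedes it below -/
import Mathlib

section
/- An abstract spectrum (S, T⁺, T⁻) satisfies T⁺ = T⁻ if and only if both (S, T⁺) and (S, T⁻) are T₁-spaces. -/
/-- `B` is a base for the topology `t`: every element of `B` is open and every
open set is a union of elements of `B`. -/
def IsBaseFor {S : Type*} (t : TopologicalSpace S) (B : Set (Set S)) : Prop :=
  (∀ V ∈ B, t.IsOpen V) ∧ ∀ U : Set S, t.IsOpen U → ∀ x ∈ U, ∃ V ∈ B, x ∈ V ∧ V ⊆ U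

/-- The family `L⁺ = {U ∈ T⁺ : S∖U ∈ T⁻}` (for `specL tp tm`); `specL tm tp` is `L⁻`. -/
def specL {S : Type*} (tp tm : TopologicalSpace S) : Set (Set S) :=
  {U | tp.IsOpen U ∧ tm.IsOpen Uᶜ}

/-- `(S, T⁺, T⁻)` is an abstract spectrum. -/
structure IsAbstractSpectrum {S : Type*} (tp tm : TopologicalSpace S) : Prop where
  nonempty : Nonempty S
  base_plus : IsBaseFor tp (specL tp tm)
  base_minus : IsBaseFor tm (specL tm tp)
  compact_of_plus_closed : ∀ F : Set S, @IsClosed S tp F → @IsCompact S tm F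
  compact_of_minus_closed : ∀ F : Set S, @IsClosed S tm F → @IsCompact S tp F
  t0 : @T0Space S tp ∨ @T0Space S tm

/-- Kelly's pairwise Hausdorff condition for the bitopological space `(S, tp, tm)`. -/
def PairwiseT2 {S : Type*} (tp tm : TopologicalSpace S) : Prop :=
  Pairwise fun x y => Disjoint (@nhds S tp x) (@nhds S tm y)

lemma PairwiseT2.isClosed_of_isCompact {S : Type*} {tp tm : TopologicalSpace S}
    (hT2 : PairwiseT2 tp tm) {s : Set S} (hs : @IsCompact S tm s) : @IsClosed S tp s :=
  (@isClosed_iff_forall_filter S tp s).2 fun x f _ hfs hfx => by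
    obtain ⟨y, hy, hfy⟩ := @IsCompact.exists_clusterPt S tm s hs f _ hfs
    by_contra hx
    have hxy : x ≠ y := fun hxy => hx (hxy ▸ hy)
    exact (hfy.mono hfx).neBot.ne (hT2 hxy).symm.eq_bot

lemma pairwiseT2_of_isBaseFor_specL {S : Type*} {tp tm : TopologicalSpace S}
    [@T1Space S tp] (hB : IsBaseFor tp (specL tp tm)) : PairwiseT2 tp tm := by
  intro x y hxy
  obtain ⟨V, ⟨hVp, hVm⟩, hxV, hVy⟩ := hB.2 {y}ᶜ (@isOpen_compl_singleton S tp _ y) x hxy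
  exact Filter.disjoint_of_disjoint_of_mem disjoint_compl_right
    (@IsOpen.mem_nhds S tp x V hVp hxV)
    (@IsOpen.mem_nhds S tm y Vᶜ hVm fun hyV => hVy hyV rfl)

/-- A topology with a base of clopen sets is regular. -/
lemma regularSpace_of_isBaseFor_specL_self {S : Type*} {t : TopologicalSpace S}
    (hB : IsBaseFor t (specL t t)) : @RegularSpace S t :=
  @RegularSpace.of_exists_mem_nhds_isClosed_subset S t fun x U hU => by
    obtain ⟨W, hWU, hWo, hxW⟩ := (@mem_nhds_iff S t x U).1 hU
    obtain ⟨V, ⟨hVo, hVc⟩, hxV, hVW⟩ := hB.2 W hWo x hxW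
    exact ⟨V, @IsOpen.mem_nhds S t x V hVo hxV, @isOpen_compl_iff S V t |>.1 hVc, hVW.trans hWU⟩

namespace IsAbstractSpectrum

variable {S : Type*} {tp tm : TopologicalSpace S}

lemma swap (h : IsAbstractSpectrum tp tm) : IsAbstractSpectrum tm tp :=
  ⟨h.nonempty, h.base_minus, h.base_plus, h.compact_of_minus_closed,
    h.compact_of_plus_closed, h.t0.symm⟩

lemma isCompact_of_isClosed_minus (h : IsAbstractSpectrum tp tm) {s : Set S}
    (hs : @IsClosed S tm s) : @IsCompact S tm s :=
  @IsCompact.of_isClosed_subset S tm _ s (h.compact_of_plus_closed _ (@isClosed_univ S tp)) hs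
    (Set.subset_univ s)

/-- Every member of `L⁻` is `T⁺`-open: its complement is `T⁻`-closed, hence `T⁻`-compact,
hence `T⁺`-closed. -/
lemma isOpen_plus_of_isOpen_minus (h : IsAbstractSpectrum tp tm) [@T1Space S tp] {U : Set S}
    (hU : tm.IsOpen U) : tp.IsOpen U := by
  refine (@isOpen_iff_forall_mem_open S tp U).2 fun x hx => ?_
  obtain ⟨V, ⟨hVm, hVp⟩, hxV, hVU⟩ := h.base_minus.2 U hU x hx
  have hVc : @IsClosed S tp Vᶜ :=
    (pairwiseT2_of_isBaseFor_specL h.base_plus).isClosed_of_isCompact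
      (h.isCompact_of_isClosed_minus (@isClosed_compl_iff S tm V |>.2 hVm))
  exact ⟨V, hVU, compl_compl V ▸ (@isOpen_compl_iff S Vᶜ tp).2 hVc, hxV⟩

lemma t1Space_of_eq (h : IsAbstractSpectrum tp tp) : @T1Space S tp :=
  letI := regularSpace_of_isBaseFor_specL_self h.base_plus
  letI : T0Space S := h.t0.elim id id
  inferInstance

end IsAbstractSpectrum

/-- An abstract spectrum `(S, T⁺, T⁻)` satisfies `T⁺ = T⁻` iff both `(S, T⁺)` and
`(S, T⁻)` are T₁-spaces. -/
theorem stmt4 {S : Type*} (tp tm : TopologicalSpace S)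
    (h : IsAbstractSpectrum tp tm) :
    tp = tm ↔ (@T1Space S tp ∧ @T1Space S tm) := by
  constructor
  · rintro rfl
    exact ⟨h.t1Space_of_eq, h.t1Space_of_eq⟩
  · rintro ⟨h1p, h1m⟩
    ext U
    exact ⟨h.swap.isOpen_plus_of_isOpen_minus, h.isOpen_plus_of_isOpen_minus⟩
end

section
/- Let (S, T⁺, T⁻) be an abstract spectrum, ordered by the specialization order a ≤ b iff a lies in the T⁻-closure of {b}. Then for every s ∈ S there exist a maximal element m of (S, ≤) with s ≤ m, and a minimal element m' of (S, ≤) with m' ≤ s. -/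
/-- The specialization order of an abstract spectrum: `a ≤ b` iff `a` lies in the
`T⁻`-closure of `{b}`. -/
def specLE {S : Type*} (tm : TopologicalSpace S) (a b : S) : Prop :=
  a ∈ @closure S tm {b}

section Helpers

variable {S : Type*} {tp tm : TopologicalSpace S}

lemma specLE_refl (a : S) : specLE tm a a := by
  letI := tm
  exact subset_closure rfl

lemma specLE_trans {a b c : S} (h1 : specLE tm a b) (h2 : specLE tm b c) :
    specLE tm a c := by
  letI := tm
  have : ({b} : Set S) ⊆ closure {c} := Set.singleton_subset_iff.mpr h2
  exact closure_minimal this isClosed_closure h1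

lemma specLE_mem_open {a b : S} (h1 : specLE tm a b) {V : Set S}
    (hV : tm.IsOpen V) (ha : a ∈ V) : b ∈ V := by
  letI := tm
  rcases (mem_closure_iff.mp h1 V hV ha) with ⟨y, hyV, hy⟩
  rcases hy with rfl
  exact hyV

lemma specLE_antisymm (h : IsAbstractSpectrum tp tm) {a b : S}
    (hab : specLE tm a b) (hba : specLE tm b a) : a = b := by
  have hins : @Inseparable S tm a b := by
    letI := tm
    have h1 : b ⤳ a := specializes_iff_mem_closure.mpr hab
    have h2 : a ⤳ b := specializes_iff_mem_closure.mpr hba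
    exact h2.antisymm h1
  rcases h.t0 with htp | htm
  · -- transfer tm-inseparability to tp-inseparability
    have hins' : @Inseparable S tp a b := by
      rw [@inseparable_iff_forall_isOpen S tp] at *
      rw [@inseparable_iff_forall_isOpen S tm] at hins
      intro U hU
      constructor
      · intro haU
        obtain ⟨V, hVL, haV, hVU⟩ := h.base_plus.2 U hU a haU
        by_contra hbU
        have hbV : b ∉ V := fun hbV => hbU (hVU hbV)
        have : a ∈ Vᶜ := (hins Vᶜ hVL.2).mpr hbV
        exact this haV
      · intro hbU
        obtain ⟨V, hVL, hbV, hVU⟩ := h.base_plus.2 U hU b hbU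
        by_contra haU
        have haV : a ∉ V := fun haV => haU (hVU haV)
        have : b ∈ Vᶜ := (hins Vᶜ hVL.2).mp haV
        exact this hbV
    exact @Inseparable.eq S tp htp a b hins'
  · exact @Inseparable.eq S tm htm a b hins

end Helpers

/-- In an abstract spectrum, every point lies below a maximal element and above a
minimal element of the specialization order. -/

theorem stmt13 {S : Type*} (tp tm : TopologicalSpace S)
    (h : IsAbstractSpectrum tp tm) (s : S) :
    (∃ m : S, specLE tm s m ∧ ∀ x : S, specLE tm m x → x = m) ∧
    (∃ m' : S, specLE tm m' s ∧ ∀ x : S, specLE tm x m' → x = m') := by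
  have hScompP : @IsCompact S tp Set.univ :=
    h.compact_of_minus_closed Set.univ (@isClosed_univ S tm)
  have hScompM : @IsCompact S tm Set.univ :=
    h.compact_of_plus_closed Set.univ (@isClosed_univ S tp)
  constructor
  · -- maximal element above s
    let α := {x : S // specLE tm s x}
    let r : α → α → Prop := fun x y => specLE tm x.1 y.1
    have hZorn : ∃ m : α, ∀ a : α, r m a → r a m := by
      apply exists_maximal_of_chains_bounded
      · intro c hc
        rcases Set.eq_empty_or_nonempty c with rfl | ⟨a₀, ha₀⟩
        · exact ⟨⟨s, specLE_refl s⟩, fun a ha => absurd ha (Set.notMem_empty a)⟩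
        · -- family of basic tp-closed sets containing some chain element
          set 𝒱 : Set (Set S) := {V | V ∈ specL tm tp ∧ ∃ a ∈ c, a.1 ∈ V} with h𝒱
          have hFIP : (Set.univ ∩ ⋂ V : 𝒱, (V : Set S)).Nonempty := by
            by_contra hemp
            rw [Set.not_nonempty_iff_eq_empty] at hemp
            obtain ⟨u, hu⟩ := @IsCompact.elim_finite_subfamily_closed S tp _ _ hScompP
              (fun V : 𝒱 => (V : Set S))
              (fun V => @IsClosed.mk S tp _ V.2.1.2)
              hemp
            -- find a chain element in all members of u
            have key : ∀ u : Finset 𝒱, ∃ a ∈ c, ∀ V ∈ u, a.1 ∈ (V : Set S) := by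
              classical
              intro u
              induction u using Finset.induction_on with
              | empty => exact ⟨a₀, ha₀, fun V hV => absurd hV (Finset.notMem_empty V)⟩
              | @insert W u hWu ih =>
                obtain ⟨a, hac, ha⟩ := ih
                obtain ⟨b, hbc, hbW⟩ := W.2.2
                rcases eq_or_ne a b with rfl | hab
                · exact ⟨a, hac, fun V hV => by
                    rcases Finset.mem_insert.mp hV with rfl | hV
                    · exact hbW
                    · exact ha V hV⟩
                · rcases hc hac hbc hab with hle | hle
                  · -- r a b : a ∈ cl{b}, so b belongs to all tm-open sets containing a
                    refine ⟨b, hbc, fun V hV => ?_⟩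
                    rcases Finset.mem_insert.mp hV with rfl | hV
                    · exact hbW
                    · exact specLE_mem_open hle V.2.1.1 (ha V hV)
                  · refine ⟨a, hac, fun V hV => ?_⟩
                    rcases Finset.mem_insert.mp hV with rfl | hV
                    · exact specLE_mem_open hle V.2.1.1 hbW
                    · exact ha V hV
            obtain ⟨a, hac, ha⟩ := key u
            have : a.1 ∈ Set.univ ∩ ⋂ V ∈ u, (V : Set S) := by
              refine ⟨trivial, ?_⟩
              simp only [Set.mem_iInter]
              exact fun V hV => ha V hV
            rw [hu] at this
            exact this
          obtain ⟨x, -, hx⟩ := hFIP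
          simp only [Set.mem_iInter] at hx
          -- x is an upper bound
          have hub : ∀ a ∈ c, specLE tm a.1 x := by
            intro a hac
            letI := tm
            rw [specLE, mem_closure_iff]
            intro U hU haU
            obtain ⟨V, hVL, haV, hVU⟩ := h.base_minus.2 U hU a.1 haU
            have hxV : x ∈ V := hx ⟨V, hVL, a, hac, haV⟩
            exact ⟨x, hVU hxV, rfl⟩
          exact ⟨⟨x, specLE_trans a₀.2 (hub a₀ ha₀)⟩, hub⟩
      · intro a b c' hab hbc
        exact specLE_trans hab hbc
    obtain ⟨m, hm⟩ := hZorn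
    refine ⟨m.1, m.2, fun x hx => ?_⟩
    have hx' : specLE tm s x := specLE_trans m.2 hx
    exact specLE_antisymm h (hm ⟨x, hx'⟩ hx) hx
  · -- minimal element below s
    let α := {x : S // specLE tm x s}
    let r : α → α → Prop := fun x y => specLE tm y.1 x.1
    have hZorn : ∃ m : α, ∀ a : α, r m a → r a m := by
      apply exists_maximal_of_chains_bounded
      · intro c hc
        rcases Set.eq_empty_or_nonempty c with rfl | ⟨a₀, ha₀⟩
        · exact ⟨⟨s, specLE_refl s⟩, fun a ha => absurd ha (Set.notMem_empty a)⟩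
        · have hFIP : (Set.univ ∩ ⋂ a : c, @closure S tm {(a : α).1}).Nonempty := by
            by_contra hemp
            rw [Set.not_nonempty_iff_eq_empty] at hemp
            obtain ⟨u, hu⟩ := @IsCompact.elim_finite_subfamily_closed S tm _ _ hScompM
              (fun a : c => @closure S tm {(a : α).1})
              (fun a => by letI := tm; exact isClosed_closure) hemp
            have key : ∀ u : Finset c, ∃ a ∈ c, ∀ b ∈ u, specLE tm a.1 (b : α).1 := by
              classical
              intro u
              induction u using Finset.induction_on with
              | empty => exact ⟨a₀, ha₀, fun b hb => absurd hb (Finset.notMem_empty b)⟩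
              | @insert w u hwu ih =>
                obtain ⟨a, hac, ha⟩ := ih
                rcases eq_or_ne a w.1 with rfl | haw
                · exact ⟨w.1, hac, fun b hb => by
                    rcases Finset.mem_insert.mp hb with rfl | hb
                    · exact specLE_refl _
                    · exact ha b hb⟩
                · rcases hc hac w.2 haw with hle | hle
                  · -- r a w.1 : specLE w.1.1 a.1
                    refine ⟨w.1, w.2, fun b hb => ?_⟩
                    rcases Finset.mem_insert.mp hb with rfl | hb
                    · exact specLE_refl _
                    · exact specLE_trans hle (ha b hb)
                  · -- r w.1 a : specLE a.1 w.1.1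
                    refine ⟨a, hac, fun b hb => ?_⟩
                    rcases Finset.mem_insert.mp hb with rfl | hb
                    · exact hle
                    · exact ha b hb
            obtain ⟨a, hac, ha⟩ := key u
            have : a.1 ∈ Set.univ ∩ ⋂ b ∈ u, @closure S tm {(b : α).1} := by
              refine ⟨trivial, ?_⟩
              simp only [Set.mem_iInter]
              exact fun b hb => ha b hb
            rw [hu] at this
            exact this
          obtain ⟨x, -, hx⟩ := hFIP
          simp only [Set.mem_iInter] at hx
          have hlb : ∀ a ∈ c, specLE tm x a.1 := fun a hac => hx ⟨a, hac⟩
          exact ⟨⟨x, specLE_trans (hlb a₀ ha₀) a₀.2⟩, hlb⟩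
      · intro a b c' hab hbc
        exact specLE_trans hbc hab
    obtain ⟨m, hm⟩ := hZorn
    refine ⟨m.1, m.2, fun x hx => ?_⟩
    have hx' : specLE tm x s := specLE_trans hx m.2
    exact specLE_antisymm h hx (hm ⟨x, hx'⟩ hx)
end

section
/- (Separation theorem for separative algebras) Let X be a separative algebra, F₀ a filter in X and I₀ an ideal in X with F₀ ∩ I₀ = ∅. Then there exist a prime filter F and a prime ideal I in X such that F₀ ⊆ F, I₀ ⊆ I and F ∩ I = ∅ (equivalently, I = X∖F). -/
/-- A carrier for two multivalued binary operations `·` and `+` on `X`. -/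
structure PresepOps (X : Type*) where
  mul : X → X → Set X
  add : X → X → Set X

namespace PresepOps

variable {X : Type*} (P : PresepOps X)

/-- The set extension `A·B = ⋃ {a·b : a ∈ A, b ∈ B}`. -/
def smul (A B : Set X) : Set X := ⋃ a ∈ A, ⋃ b ∈ B, P.mul a b

/-- The set extension `A+B = ⋃ {a+b : a ∈ A, b ∈ B}`. -/
def sadd (A B : Set X) : Set X := ⋃ a ∈ A, ⋃ b ∈ B, P.add a b

/-- `(X, ·, +)` is a preseparative algebra: `X` is nonempty, both operations are
commutative and associative (associativity via the set extensions), and axiom (iii):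
if `a ∈ b+x` and `c ∈ d·x` then `(a·d) ∩ (b+c) ≠ ∅`. -/
structure IsPresep : Prop where
  nonempty : Nonempty X
  mul_comm : ∀ a b : X, P.mul a b = P.mul b a
  add_comm : ∀ a b : X, P.add a b = P.add b a
  mul_assoc : ∀ a b c : X, P.smul {a} (P.mul b c) = P.smul (P.mul a b) {c}
  add_assoc : ∀ a b c : X, P.sadd {a} (P.add b c) = P.sadd (P.add a b) {c}
  sep : ∀ a b c d x : X, a ∈ P.add b x → c ∈ P.mul d x →
    (P.mul a d ∩ P.add b c).Nonempty

/-- A filter: `F·F ⊆ F`. -/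
def IsFilter (F : Set X) : Prop := P.smul F F ⊆ F

/-- An ideal: `I+I ⊆ I`. -/
def IsIdeal (I : Set X) : Prop := P.sadd I I ⊆ I

/-- A prime filter: a filter whose complement is an ideal. -/
def IsPrimeFilter (F : Set X) : Prop := P.IsFilter F ∧ P.IsIdeal Fᶜ

/-- A prime ideal: an ideal whose complement is a filter. -/
def IsPrimeIdeal (I : Set X) : Prop := P.IsIdeal I ∧ P.IsFilter Iᶜ

/-- `μ(A)`: the smallest filter containing `A` (the intersection of all filters
containing `A`, which is a filter). -/
def mu (A : Set X) : Set X := ⋂₀ {F | P.IsFilter F ∧ A ⊆ F}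

/-- `α(A)`: the smallest ideal containing `A` (the intersection of all ideals
containing `A`, which is an ideal). -/
def alpha (A : Set X) : Set X := ⋂₀ {I | P.IsIdeal I ∧ A ⊆ I}

/-- `x ≤ y` iff `μ({x}) ∩ α({y}) ≠ ∅`. A preseparative algebra is a separative algebra
iff this relation is transitive. -/
def le (x y : X) : Prop := (P.mu {x} ∩ P.alpha {y}).Nonempty

end PresepOps

namespace PresepOps

variable {X : Type*} (P : PresepOps X)

lemma mem_smul {A B : Set X} {z : X} :
    z ∈ P.smul A B ↔ ∃ a ∈ A, ∃ b ∈ B, z ∈ P.mul a b := by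
  simp [smul]

lemma mem_sadd {A B : Set X} {z : X} :
    z ∈ P.sadd A B ↔ ∃ a ∈ A, ∃ b ∈ B, z ∈ P.add a b := by
  simp [sadd]

lemma smul_mono {A A' B B' : Set X} (hA : A ⊆ A') (hB : B ⊆ B') :
    P.smul A B ⊆ P.smul A' B' := by
  intro z hz
  rcases P.mem_smul.1 hz with ⟨a, ha, b, hb, h⟩
  exact P.mem_smul.2 ⟨a, hA ha, b, hB hb, h⟩

variable {P}

lemma smul_comm (hP : P.IsPresep) (A B : Set X) : P.smul A B = P.smul B A := by
  ext z
  simp only [mem_smul]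
  constructor
  · rintro ⟨a, ha, b, hb, h⟩; exact ⟨b, hb, a, ha, (hP.mul_comm a b) ▸ h⟩
  · rintro ⟨a, ha, b, hb, h⟩; exact ⟨b, hb, a, ha, (hP.mul_comm a b) ▸ h⟩

lemma smul_assoc (hP : P.IsPresep) (A B C : Set X) :
    P.smul (P.smul A B) C = P.smul A (P.smul B C) := by
  ext z
  constructor
  · intro hz
    rcases P.mem_smul.1 hz with ⟨v, hv, c, hc, hz1⟩
    rcases P.mem_smul.1 hv with ⟨a, ha, b, hb, hv1⟩
    have h1 : z ∈ P.smul (P.mul a b) {c} := P.mem_smul.2 ⟨v, hv1, c, rfl, hz1⟩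
    rw [← hP.mul_assoc a b c] at h1
    rcases P.mem_smul.1 h1 with ⟨a', ha', w, hw, hz2⟩
    rcases ha' with rfl
    exact P.mem_smul.2 ⟨a', ha, w, P.mem_smul.2 ⟨b, hb, c, hc, hw⟩, hz2⟩
  · intro hz
    rcases P.mem_smul.1 hz with ⟨a, ha, w, hw, hz1⟩
    rcases P.mem_smul.1 hw with ⟨b, hb, c, hc, hw1⟩
    have h1 : z ∈ P.smul {a} (P.mul b c) := P.mem_smul.2 ⟨a, rfl, w, hw1, hz1⟩
    rw [hP.mul_assoc a b c] at h1
    rcases P.mem_smul.1 h1 with ⟨v, hv, c', hc', hz2⟩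
    rcases hc' with rfl
    exact P.mem_smul.2 ⟨v, P.mem_smul.2 ⟨a, ha, b, hb, hv⟩, c', hc, hz2⟩

variable (P)

/-- basic facts about `mu`. -/
lemma subset_mu (A : Set X) : A ⊆ P.mu A := by
  intro a ha
  exact Set.mem_sInter.2 fun F hF => hF.2 ha

lemma mu_min {A F : Set X} (hF : P.IsFilter F) (hAF : A ⊆ F) : P.mu A ⊆ F :=
  Set.sInter_subset_of_mem ⟨hF, hAF⟩

lemma mu_isFilter (A : Set X) : P.IsFilter (P.mu A) := by
  intro z hz
  rcases P.mem_smul.1 hz with ⟨a, ha, b, hb, h⟩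
  refine Set.mem_sInter.2 fun F hF => ?_
  have haF : a ∈ F := Set.mem_sInter.1 ha F hF
  have hbF : b ∈ F := Set.mem_sInter.1 hb F hF
  exact hF.1 (P.mem_smul.2 ⟨a, haF, b, hbF, h⟩)

lemma subset_alpha (A : Set X) : A ⊆ P.alpha A := by
  intro a ha
  exact Set.mem_sInter.2 fun I hI => hI.2 ha

lemma alpha_min {A I : Set X} (hI : P.IsIdeal I) (hAI : A ⊆ I) : P.alpha A ⊆ I :=
  Set.sInter_subset_of_mem ⟨hI, hAI⟩

lemma alpha_isIdeal (A : Set X) : P.IsIdeal (P.alpha A) := by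
  intro z hz
  rcases P.mem_sadd.1 hz with ⟨a, ha, b, hb, h⟩
  refine Set.mem_sInter.2 fun I hI => ?_
  have haI : a ∈ I := Set.mem_sInter.1 ha I hI
  have hbI : b ∈ I := Set.mem_sInter.1 hb I hI
  exact hI.1 (P.mem_sadd.2 ⟨a, haI, b, hbI, h⟩)

lemma filter_mul_subset {F : Set X} (hF : P.IsFilter F) {a b : X} (ha : a ∈ F) (hb : b ∈ F) :
    P.mul a b ⊆ F := fun _ hz => hF (P.mem_smul.2 ⟨a, ha, b, hb, hz⟩)

lemma ideal_add_subset {I : Set X} (hI : P.IsIdeal I) {a b : X} (ha : a ∈ I) (hb : b ∈ I) :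
    P.add a b ⊆ I := fun _ hz => hI (P.mem_sadd.2 ⟨a, ha, b, hb, hz⟩)

/-- The opposite (swapped) algebra. -/
def osw : PresepOps X := ⟨P.add, P.mul⟩

variable {P}

lemma osw_isPresep (hP : P.IsPresep) : P.osw.IsPresep := by
  refine ⟨hP.nonempty, hP.add_comm, hP.mul_comm, hP.add_assoc, hP.mul_assoc, ?_⟩
  intro a b c d x ha hc
  rcases hP.sep c d a b x hc ha with ⟨u, hu1, hu2⟩
  rw [hP.mul_comm c b] at hu1
  rw [hP.add_comm d a] at hu2
  exact ⟨u, hu2, hu1⟩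

variable (P)

/-- Inductive characterization of membership in generated filters. -/
inductive mulCl (A : Set X) : X → Prop
  | base {a : X} : a ∈ A → mulCl A a
  | step {a b c : X} : mulCl A a → mulCl A b → c ∈ P.mul a b → mulCl A c

lemma mu_eq (A : Set X) : P.mu A = {z | P.mulCl A z} := by
  apply Set.Subset.antisymm
  · refine P.mu_min ?_ (fun a ha => mulCl.base ha)
    intro z hz
    rcases P.mem_smul.1 hz with ⟨a, ha, b, hb, h⟩
    exact mulCl.step ha hb h
  · intro z hz
    induction hz with
    | base h => exact P.subset_mu A h
    | step ha hb h iha ihb =>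
        exact P.mu_isFilter A (P.mem_smul.2 ⟨_, iha, _, ihb, h⟩)

variable {P}

/-- Key inductive lemma (uses only axiom (iii) and associativity):
if `f₀ ∈ i₁ + q` then for every `w ∈ μ{q}` there are `i ∈ α{i₁}` and
`e ∈ μ{f₀}` with `e ∈ i + w`. -/
lemma Q4 (hP : P.IsPresep) {f₀ i₁ q : X} (hf₀ : f₀ ∈ P.add i₁ q) :
    ∀ {w : X}, w ∈ P.mu {q} →
      ∃ i ∈ P.alpha {i₁}, ∃ e ∈ P.mu {f₀}, e ∈ P.add i w := by
  intro w hw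
  rw [P.mu_eq] at hw
  induction hw with
  | @base a h =>
      rcases h with rfl
      exact ⟨i₁, P.subset_alpha _ rfl, f₀, P.subset_mu _ rfl, hf₀⟩
  | @step a b c ha hb hc iha ihb =>
      rcases iha with ⟨i, hi, e, he, hei⟩
      rcases ihb with ⟨i', hi', e', he', he'b⟩
      -- first application of sep: e ∈ i + a, c ∈ b·a
      have hc' : c ∈ P.mul b a := (hP.mul_comm a b) ▸ hc
      rcases hP.sep e i c b a hei hc' with ⟨u, hu1, hu2⟩
      -- second application: e' ∈ i' + b, u ∈ e·b
      rcases hP.sep e' i' u e b he'b hu1 with ⟨v, hv1, hv2⟩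
      -- v ∈ e'·e ⊆ μ{f₀}
      have hvF : v ∈ P.mu {f₀} :=
        P.filter_mul_subset (P.mu_isFilter _) he' he hv1
      -- v ∈ i' + u, u ∈ i + c  ⇒  ∃ k ∈ i' + i, v ∈ k + c
      have : v ∈ P.sadd {i'} (P.add i c) := P.mem_sadd.2 ⟨i', rfl, u, hu2, hv2⟩
      rw [hP.add_assoc i' i c] at this
      rcases P.mem_sadd.1 this with ⟨k, hk, c', hc2, hv3⟩
      rcases hc2 with rfl
      have hkI : k ∈ P.alpha {i₁} :=
        P.ideal_add_subset (P.alpha_isIdeal _) hi' hi hk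
      exact ⟨k, hkI, v, hvF, hv3⟩

/-- Dual of `Q4`, obtained from the swapped algebra. -/
lemma Q4' (hP : P.IsPresep) {i₀ f₁ p : X} (hi₀ : i₀ ∈ P.mul f₁ p) :
    ∀ {w : X}, w ∈ P.alpha {p} →
      ∃ f ∈ P.mu {f₁}, ∃ e ∈ P.alpha {i₀}, e ∈ P.mul f w := by
  intro w hw
  exact Q4 (P := P.osw) (osw_isPresep hP) hi₀ hw

/-- Decomposition of the filter generated by `F ∪ {x}`. -/
lemma mu_union (hP : P.IsPresep) {F : Set X} (hF : P.IsFilter F) (x : X) :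
    P.mu (F ∪ {x}) ⊆ F ∪ P.mu {x} ∪ P.smul F (P.mu {x}) := by
  set M := P.mu {x} with hM
  have hMF : P.IsFilter M := P.mu_isFilter _
  have c1 : P.smul F (P.smul F M) ⊆ P.smul F M := by
    rw [← smul_assoc hP F F M]
    exact P.smul_mono hF subset_rfl
  have c2 : P.smul M (P.smul F M) ⊆ P.smul F M := by
    have heq : P.smul M (P.smul F M) = P.smul F (P.smul M M) := by
      rw [← smul_assoc hP M F M, smul_comm hP M F, smul_assoc hP F M M]
    rw [heq]
    exact P.smul_mono subset_rfl hMF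
  have c3 : P.smul (P.smul F M) (P.smul F M) ⊆ P.smul F M := by
    rw [smul_assoc hP F M (P.smul F M)]
    exact (P.smul_mono subset_rfl c2).trans c1
  have hU : P.IsFilter (F ∪ M ∪ P.smul F M) := by
    intro z hz
    rcases P.mem_smul.1 hz with ⟨a, ha, b, hb, h⟩
    have h' : z ∈ P.mul b a := (hP.mul_comm a b) ▸ h
    have hmem : ∀ {A B : Set X}, a ∈ A → b ∈ B → z ∈ P.smul A B :=
      fun hA hB => P.mem_smul.2 ⟨a, hA, b, hB, h⟩
    have hmem' : ∀ {A B : Set X}, b ∈ A → a ∈ B → z ∈ P.smul A B :=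
      fun hA hB => P.mem_smul.2 ⟨b, hA, a, hB, h'⟩
    rcases ha with (ha | ha) | ha <;> rcases hb with (hb | hb) | hb
    · exact Or.inl (Or.inl (hF (hmem ha hb)))
    · exact Or.inr (hmem ha hb)
    · exact Or.inr (c1 (hmem ha hb))
    · exact Or.inr (hmem' hb ha)
    · exact Or.inl (Or.inr (hMF (hmem ha hb)))
    · exact Or.inr (c2 (hmem ha hb))
    · exact Or.inr (c1 (hmem' hb ha))
    · exact Or.inr (c2 (hmem' hb ha))
    · exact Or.inr (c3 (hmem ha hb))
  refine P.mu_min hU ?_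
  intro a ha
  rcases ha with ha | ha
  · exact Or.inl (Or.inl ha)
  · exact Or.inl (Or.inr (P.subset_mu _ ha))

lemma alpha_union (hP : P.IsPresep) {I : Set X} (hI : P.IsIdeal I) (x : X) :
    P.alpha (I ∪ {x}) ⊆ I ∪ P.alpha {x} ∪ P.sadd I (P.alpha {x}) :=
  mu_union (P := P.osw) (osw_isPresep hP) hI x

/-- From `f₀ ∈ F ∩ (i₁ + q)` with `i₁ ∈ I` and `w ∈ μ{q} ∩ I`: contradiction. -/
lemma caseM (hP : P.IsPresep) {F I : Set X} (hF : P.IsFilter F) (hI : P.IsIdeal I)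
    (hd : F ∩ I = ∅) {f₀ i₁ q w : X} (hf₀F : f₀ ∈ F) (hf₀ : f₀ ∈ P.add i₁ q)
    (hi₁ : i₁ ∈ I) (hw : w ∈ P.mu {q}) (hwI : w ∈ I) : False := by
  rcases Q4 hP hf₀ hw with ⟨i, hi, e, he, hei⟩
  have hiI : i ∈ I := P.alpha_min hI (by simpa using hi₁) hi
  have heF : e ∈ F := P.mu_min hF (by simpa using hf₀F) he
  have heI : e ∈ I := P.ideal_add_subset hI hiI hwI hei
  have : e ∈ F ∩ I := ⟨heF, heI⟩
  rw [hd] at this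
  exact this

lemma caseM' (hP : P.IsPresep) {F I : Set X} (hF : P.IsFilter F) (hI : P.IsIdeal I)
    (hd : F ∩ I = ∅) {i₀ f₁ p w : X} (hi₀I : i₀ ∈ I) (hi₀ : i₀ ∈ P.mul f₁ p)
    (hf₁ : f₁ ∈ F) (hw : w ∈ P.alpha {p}) (hwF : w ∈ F) : False := by
  have hd' : I ∩ F = ∅ := by rw [Set.inter_comm]; exact hd
  exact caseM (P := P.osw) (osw_isPresep hP) hI hF hd' hi₀I hi₀ hf₁ hw hwF

/-- Case D: both witnesses are mixed. -/
lemma caseD (hP : P.IsPresep) {F I : Set X} (hF : P.IsFilter F) (hI : P.IsIdeal I)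
    (hd : F ∩ I = ∅) {f₀ i₁ q i₀ f₁ p w : X}
    (hf₀F : f₀ ∈ F) (hf₀ : f₀ ∈ P.add i₁ q) (hi₁ : i₁ ∈ I)
    (hi₀I : i₀ ∈ I) (hi₀ : i₀ ∈ P.mul f₁ p) (hf₁ : f₁ ∈ F)
    (hwq : w ∈ P.mu {q}) (hwp : w ∈ P.alpha {p}) : False := by
  rcases Q4 hP hf₀ hwq with ⟨i, hi, e, he, hei⟩
  rcases Q4' hP hi₀ hwp with ⟨f, hf, e', he', he'f⟩
  have hiI : i ∈ I := P.alpha_min hI (by simpa using hi₁) hi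
  have heF : e ∈ F := P.mu_min hF (by simpa using hf₀F) he
  have hfF : f ∈ F := P.mu_min hF (by simpa using hf₁) hf
  have he'I : e' ∈ I := P.alpha_min hI (by simpa using hi₀I) he'
  rcases hP.sep e i e' f w hei he'f with ⟨u, hu1, hu2⟩
  have huF : u ∈ F := P.filter_mul_subset hF heF hfF hu1
  have huI : u ∈ I := P.ideal_add_subset hI hiI he'I hu2
  have : u ∈ F ∩ I := ⟨huF, huI⟩
  rw [hd] at this
  exact this

/-- The central lemma: for disjoint filter/ideal the two extensions cannot both fail. -/
lemma central (hP : P.IsPresep) (hsep : Transitive P.le) {F I : Set X}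
    (hF : P.IsFilter F) (hI : P.IsIdeal I) (hd : F ∩ I = ∅) (x : X)
    (h1 : (P.mu (F ∪ {x}) ∩ I).Nonempty) (h2 : (P.alpha (I ∪ {x}) ∩ F).Nonempty) :
    False := by
  have hdne : ∀ z : X, z ∈ F → z ∈ I → False := by
    intro z h1 h2
    have : z ∈ F ∩ I := ⟨h1, h2⟩
    rw [hd] at this
    exact this
  rcases h1 with ⟨i₀, hi₀mem, hi₀I⟩
  rcases h2 with ⟨f₀, hf₀mem, hf₀F⟩
  have hi₀' := mu_union hP hF x hi₀mem
  have hf₀' := alpha_union hP hI x hf₀mem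
  -- dispose of the trivial buckets
  rcases hi₀' with (hi₀' | hi₀') | hi₀'
  · exact hdne i₀ hi₀' hi₀I
  · -- i₀ ∈ μ{x}
    rcases hf₀' with (hf₀' | hf₀') | hf₀'
    · exact hdne f₀ hf₀F hf₀'
    · -- case A
      have l1 : P.le f₀ x := ⟨f₀, P.subset_mu _ rfl, hf₀'⟩
      have l2 : P.le x i₀ := ⟨i₀, hi₀', P.subset_alpha _ rfl⟩
      rcases hsep l1 l2 with ⟨z, hz1, hz2⟩
      exact hdne z (P.mu_min hF (by simpa using hf₀F) hz1)
        (P.alpha_min hI (by simpa using hi₀I) hz2)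
    · -- case B: f₀ ∈ I + α{x}
      rcases P.mem_sadd.1 hf₀' with ⟨i₁, hi₁, q, hq, hf₀q⟩
      have l1 : P.le q x := ⟨q, P.subset_mu _ rfl, hq⟩
      have l2 : P.le x i₀ := ⟨i₀, hi₀', P.subset_alpha _ rfl⟩
      rcases hsep l1 l2 with ⟨w, hw1, hw2⟩
      exact caseM hP hF hI hd hf₀F hf₀q hi₁ hw1
        (P.alpha_min hI (by simpa using hi₀I) hw2)
  · -- i₀ ∈ F·μ{x}
    rcases P.mem_smul.1 hi₀' with ⟨f₁, hf₁, p, hp, hi₀p⟩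
    rcases hf₀' with (hf₀' | hf₀') | hf₀'
    · exact hdne f₀ hf₀F hf₀'
    · -- case C
      have l1 : P.le f₀ x := ⟨f₀, P.subset_mu _ rfl, hf₀'⟩
      have l2 : P.le x p := ⟨p, hp, P.subset_alpha _ rfl⟩
      rcases hsep l1 l2 with ⟨w, hw1, hw2⟩
      exact caseM' hP hF hI hd hi₀I hi₀p hf₁ hw2
        (P.mu_min hF (by simpa using hf₀F) hw1)
    · -- case D
      rcases P.mem_sadd.1 hf₀' with ⟨i₁, hi₁, q, hq, hf₀q⟩
      have l1 : P.le q x := ⟨q, P.subset_mu _ rfl, hq⟩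
      have l2 : P.le x p := ⟨p, hp, P.subset_alpha _ rfl⟩
      rcases hsep l1 l2 with ⟨w, hw1, hw2⟩
      exact caseD hP hF hI hd hf₀F hf₀q hi₁ hi₀I hi₀p hf₁ hw1 hw2

end PresepOps

/-- Separation theorem for separative algebras: if `F₀` is a filter, `I₀` an ideal and
`F₀ ∩ I₀ = ∅`, then there exist a prime filter `F` and a prime ideal `I` with `F₀ ⊆ F`,
`I₀ ⊆ I` and `F ∩ I = ∅`. -/
theorem stmt18 {X : Type*} (P : PresepOps X) (hP : P.IsPresep)
    (hsep : Transitive P.le)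
    (F₀ I₀ : Set X) (hF₀ : P.IsFilter F₀) (hI₀ : P.IsIdeal I₀)
    (hdisj : F₀ ∩ I₀ = ∅) :
    ∃ F I : Set X, P.IsPrimeFilter F ∧ P.IsPrimeIdeal I ∧
      F₀ ⊆ F ∧ I₀ ⊆ I ∧ F ∩ I = ∅ := by
  classical
  -- Zorn's lemma on pairs (filter, ideal)
  set S : Set (Set X × Set X) :=
    {p | P.IsFilter p.1 ∧ P.IsIdeal p.2 ∧ p.1 ∩ p.2 = ∅} with hS
  obtain ⟨m, hle, hmax⟩ :
      ∃ m, (F₀, I₀) ≤ m ∧ Maximal (· ∈ S) m := by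
    apply zorn_le_nonempty₀ S ?_ (F₀, I₀) ⟨hF₀, hI₀, hdisj⟩
    intro c hcS hc y hy
    refine ⟨(⋃ p ∈ c, p.1, ⋃ p ∈ c, p.2), ⟨?_, ?_, ?_⟩, ?_⟩
    · -- the union of first components is a filter
      intro z hz
      rcases P.mem_smul.1 hz with ⟨a, ha, b, hb, h⟩
      simp only [Set.mem_iUnion] at ha hb ⊢
      rcases ha with ⟨p, hp, hap⟩
      rcases hb with ⟨p', hp', hbp⟩
      rcases hc.total hp hp' with hpp | hpp
      · exact ⟨p', hp', (hcS hp').1 (P.mem_smul.2 ⟨a, hpp.1 hap, b, hbp, h⟩)⟩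
      · exact ⟨p, hp, (hcS hp).1 (P.mem_smul.2 ⟨a, hap, b, hpp.1 hbp, h⟩)⟩
    · intro z hz
      rcases P.mem_sadd.1 hz with ⟨a, ha, b, hb, h⟩
      simp only [Set.mem_iUnion] at ha hb ⊢
      rcases ha with ⟨p, hp, hap⟩
      rcases hb with ⟨p', hp', hbp⟩
      rcases hc.total hp hp' with hpp | hpp
      · exact ⟨p', hp', (hcS hp').2.1 (P.mem_sadd.2 ⟨a, hpp.2 hap, b, hbp, h⟩)⟩
      · exact ⟨p, hp, (hcS hp).2.1 (P.mem_sadd.2 ⟨a, hap, b, hpp.2 hbp, h⟩)⟩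
    · rw [Set.eq_empty_iff_forall_notMem]
      rintro z ⟨hz1, hz2⟩
      simp only [Set.mem_iUnion] at hz1 hz2
      rcases hz1 with ⟨p, hp, hzp⟩
      rcases hz2 with ⟨p', hp', hzp'⟩
      have : ∀ r ∈ c, z ∈ r.1 → z ∈ r.2 → False := by
        intro r hr h1 h2
        have := (hcS hr).2.2
        rw [Set.eq_empty_iff_forall_notMem] at this
        exact this z ⟨h1, h2⟩
      rcases hc.total hp hp' with hpp | hpp
      · exact this p' hp' (hpp.1 hzp) hzp'
      · exact this p hp hzp (hpp.2 hzp')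
    · intro z hzc
      exact ⟨Set.subset_biUnion_of_mem hzc, Set.subset_biUnion_of_mem hzc⟩
  obtain ⟨F, I⟩ := m
  obtain ⟨hF, hI, hd⟩ := hmax.1
  have hdne : ∀ z : X, z ∈ F → z ∈ I → False := by
    intro z h1 h2
    have : z ∈ F ∩ I := ⟨h1, h2⟩
    rw [hd] at this
    exact this
  -- F ∪ I = univ
  have hcover : ∀ x : X, x ∈ F ∨ x ∈ I := by
    intro x
    by_contra hx
    push_neg at hx
    obtain ⟨hxF, hxI⟩ := hx
    -- by the central lemma, one of the extensions stays disjoint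
    by_cases h1 : (P.mu (F ∪ {x}) ∩ I).Nonempty
    · have h2 : ¬ (P.alpha (I ∪ {x}) ∩ F).Nonempty := fun h2 =>
        PresepOps.central hP hsep hF hI hd x h1 h2
      -- extend I
      have hmem : ((F, P.alpha (I ∪ {x})) : Set X × Set X) ∈ S := by
        refine ⟨hF, P.alpha_isIdeal _, ?_⟩
        rw [Set.eq_empty_iff_forall_notMem]
        rintro z ⟨hz1, hz2⟩
        exact h2 ⟨z, hz2, hz1⟩
      have hge : ((F, I) : Set X × Set X) ≤ (F, P.alpha (I ∪ {x})) :=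
        ⟨le_refl _, (Set.subset_union_left).trans (P.subset_alpha _)⟩
      have := (hmax.2 hmem hge).2
      exact hxI (this (P.subset_alpha _ (Set.mem_union_right _ rfl)))
    · -- extend F
      have hmem : ((P.mu (F ∪ {x}), I) : Set X × Set X) ∈ S := by
        refine ⟨P.mu_isFilter _, hI, ?_⟩
        rw [Set.eq_empty_iff_forall_notMem]
        rintro z hz
        exact h1 ⟨z, hz⟩
      have hge : ((F, I) : Set X × Set X) ≤ (P.mu (F ∪ {x}), I) :=
        ⟨(Set.subset_union_left).trans (P.subset_mu _), le_refl _⟩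
      have := (hmax.2 hmem hge).1
      exact hxF (this (P.subset_mu _ (Set.mem_union_right _ rfl)))
  have hIc : I = Fᶜ := by
    ext z
    constructor
    · intro hz hzF
      exact hdne z hzF hz
    · intro hz
      rcases hcover z with h | h
      · exact absurd h hz
      · exact h
  refine ⟨F, I, ⟨hF, ?_⟩, ⟨hI, ?_⟩, hle.1, hle.2, hd⟩
  · rw [← hIc]; exact hI
  · rw [hIc, compl_compl]; exact hF
end
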